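/- arXiv:1612.03586 — 4 statements merged into one kernel-verified Lean document; each statement's English description precedes it below -/
import Mathlib

section
/- Let 0 < h < 2π/3 and let T_i be the trigonometric cubic B-spline on the uniform knots x_j = x_0 + j·h. Then T_i is differentiable at the knots x_{i-1}, x_i, x_{i+1}, and its derivative there takes the values T_i′(x_{i-1}) = (3/4)/sin(3h/2), T_i′(x_i) = 0, and T_i′(x_{i+1}) = −(3/4)/sin(3h/2). -/
open Real

/-- The uniform knots `x_j = x₀ + j·h`. -/
noncomputable def knot (h x₀ : ℝ) (j : ℤ) : ℝ := x₀ + (j : ℝ) * h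

/-- The trigonometric cubic B-spline `T_i` on the uniform knots `x_j = x₀ + j·h`,
defined piecewise via `w_c(x) = sin((x-c)/2)`, `y_c(x) = sin((c-x)/2)` and
`γ = sin(h/2)·sin(h)·sin(3h/2)`. -/
noncomputable def trigBSpline (h x₀ : ℝ) (i : ℤ) (x : ℝ) : ℝ :=
  let X : ℤ → ℝ := knot h x₀
  let w : ℝ → ℝ := fun c => Real.sin ((x - c) / 2)
  let y : ℝ → ℝ := fun c => Real.sin ((c - x) / 2)
  let γ : ℝ := Real.sin (h / 2) * Real.sin h * Real.sin (3 * h / 2)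
  if x ∈ Set.Icc (X (i - 2)) (X (i - 1)) then
    (1 / γ) * (w (X (i - 2))) ^ 3
  else if x ∈ Set.Icc (X (i - 1)) (X i) then
    (1 / γ) * (w (X (i - 2)) * (w (X (i - 2)) * y (X i) + y (X (i + 1)) * w (X (i - 1)))
      + y (X (i + 2)) * (w (X (i - 1))) ^ 2)
  else if x ∈ Set.Icc (X i) (X (i + 1)) then
    (1 / γ) * (w (X (i - 2)) * (y (X (i + 1))) ^ 2
      + y (X (i + 2)) * (w (X (i - 1)) * y (X (i + 1)) + y (X (i + 2)) * w (X i)))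
  else if x ∈ Set.Icc (X (i + 1)) (X (i + 2)) then
    (1 / γ) * (y (X (i + 2))) ^ 3
  else 0

open Set

/-! Translating by `x_{i-2}` and factoring out `1/γ` turns `T_i` into `unscaledTrigBSpline h`,
with knots `0, h, …, 4h`, whose pieces on `[2h, 3h]` and `[3h, 4h]` are the mirror images under
`x ↦ 4h - x` of the pieces on `[h, 2h]` and `[0, h]`. So only the knots `h` and `2h` need a
computation: adjacent pieces agree there, and with `sin h = 2 sin(h/2) cos(h/2)` their slopes are
`(3/2) sin²(h/2) cos(h/2)` at `h` and `0` at `2h`. Reflection gives the knot `3h`, and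
`γ = 2 sin²(h/2) cos(h/2) sin(3h/2)` turns the slope at `h` into `(3/4)/sin(3h/2)`. -/

noncomputable def trigBSplineEdge (x : ℝ) : ℝ := sin (x / 2) ^ 3

noncomputable def trigBSplineCore (h x : ℝ) : ℝ :=
  sin (x / 2) * (sin (x / 2) * sin ((2 * h - x) / 2) + sin ((3 * h - x) / 2) * sin ((x - h) / 2))
    + sin ((4 * h - x) / 2) * sin ((x - h) / 2) ^ 2

noncomputable def unscaledTrigBSpline (h x : ℝ) : ℝ :=
  if x ∈ Icc 0 h then trigBSplineEdge x
  else if x ∈ Icc h (2 * h) then trigBSplineCore h x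
  else if x ∈ Icc (2 * h) (3 * h) then trigBSplineCore h (4 * h - x)
  else if x ∈ Icc (3 * h) (4 * h) then trigBSplineEdge (4 * h - x)
  else 0

lemma knot_eq_mul_add_knot {h x₀ c : ℝ} {i j : ℤ} (hj : (j : ℝ) = i + c) :
    knot h x₀ j = c * h + knot h x₀ i := by
  simp only [knot, hj]
  ring

lemma trigBSpline_eq_unscaled (h x₀ : ℝ) (i : ℤ) (x : ℝ) :
    trigBSpline h x₀ i x = 1 / (sin (h / 2) * sin h * sin (3 * h / 2))
      * unscaledTrigBSpline h (x - knot h x₀ (i - 2)) := by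
  simp only [trigBSpline, unscaledTrigBSpline, trigBSplineEdge, trigBSplineCore,
    knot_eq_mul_add_knot (i := i - 2) (j := i - 1) (c := 1) (by push_cast; ring),
    knot_eq_mul_add_knot (i := i - 2) (j := i) (c := 2) (by push_cast; ring),
    knot_eq_mul_add_knot (i := i - 2) (j := i + 1) (c := 3) (by push_cast; ring),
    knot_eq_mul_add_knot (i := i - 2) (j := i + 2) (c := 4) (by push_cast; ring),
    sub_mem_Icc_iff_left, one_mul, zero_add]
  -- normalising the sine arguments matches the last two pieces with the reflected ones
  split_ifs <;> ring_nf

lemma hasDerivAt_of_eqOn_Icc {f g k : ℝ → ℝ} {a b c f' : ℝ} (hab : a < b) (hbc : b < c)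
    (hfg : EqOn f g (Icc a b)) (hfk : EqOn f k (Icc b c))
    (hg : HasDerivAt g f' b) (hk : HasDerivAt k f' b) : HasDerivAt f f' b := by
  have hleft : HasDerivWithinAt f f' (Iic b) b :=
    hg.hasDerivWithinAt.congr_of_eventuallyEq
      (Filter.eventuallyEq_of_mem (Icc_mem_nhdsLE hab) hfg) (hfg ⟨hab.le, le_rfl⟩)
  have hright : HasDerivWithinAt f f' (Ici b) b :=
    hk.hasDerivWithinAt.congr_of_eventuallyEq
      (Filter.eventuallyEq_of_mem (Icc_mem_nhdsGE hbc) hfk) (hfk ⟨le_rfl, hbc.le⟩)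
  simpa only [Iic_union_Ici, hasDerivWithinAt_univ] using hleft.union hright

lemma hasDerivAt_sin_div_two (x : ℝ) :
    HasDerivAt (fun t => sin (t / 2)) (cos (x / 2) / 2) x := by
  simpa [div_eq_mul_inv] using ((hasDerivAt_id x).div_const 2).sin

lemma hasDerivAt_sin_sub_div_two (c x : ℝ) :
    HasDerivAt (fun t => sin ((t - c) / 2)) (cos ((x - c) / 2) / 2) x := by
  simpa [div_eq_mul_inv] using (((hasDerivAt_id x).sub_const c).div_const 2).sin

lemma hasDerivAt_sin_const_sub_div_two (c x : ℝ) :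
    HasDerivAt (fun t => sin ((c - t) / 2)) (-(cos ((c - x) / 2) / 2)) x := by
  simpa [div_eq_mul_inv] using (((hasDerivAt_id x).const_sub c).div_const 2).sin

lemma hasDerivAt_trigBSplineEdge (x : ℝ) :
    HasDerivAt trigBSplineEdge (3 / 2 * sin (x / 2) ^ 2 * cos (x / 2)) x :=
  ((hasDerivAt_sin_div_two x).pow 3).congr_deriv (by ring)

lemma trigBSplineCore_self (h : ℝ) : trigBSplineCore h h = trigBSplineEdge h := by
  simp only [trigBSplineCore, trigBSplineEdge, sub_self, zero_div, sin_zero]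
  rw [show (2 * h - h) / 2 = h / 2 by ring]
  ring

lemma hasDerivAt_trigBSplineCore (h x : ℝ) :
    HasDerivAt (trigBSplineCore h)
      (cos (x / 2) / 2 * (sin (x / 2) * sin ((2 * h - x) / 2)
          + sin ((3 * h - x) / 2) * sin ((x - h) / 2))
        + sin (x / 2) * (cos (x / 2) / 2 * sin ((2 * h - x) / 2)
          - sin (x / 2) * (cos ((2 * h - x) / 2) / 2)
          - cos ((3 * h - x) / 2) / 2 * sin ((x - h) / 2)
          + sin ((3 * h - x) / 2) * (cos ((x - h) / 2) / 2))
        - cos ((4 * h - x) / 2) / 2 * sin ((x - h) / 2) ^ 2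
        + sin ((4 * h - x) / 2) * (sin ((x - h) / 2) * cos ((x - h) / 2))) x := by
  have d0 := hasDerivAt_sin_div_two x
  have d1 := hasDerivAt_sin_sub_div_two h x
  have d2 := hasDerivAt_sin_const_sub_div_two (2 * h) x
  have d3 := hasDerivAt_sin_const_sub_div_two (3 * h) x
  have d4 := hasDerivAt_sin_const_sub_div_two (4 * h) x
  exact ((d0.mul ((d0.mul d2).add (d3.mul d1))).add (d4.mul (d1.pow 2))).congr_deriv
    (by simp only [Pi.add_apply, Pi.mul_apply, Pi.pow_apply]; ring)

lemma sin_eq_two_mul_sin_half_mul_cos_half (x : ℝ) : sin x = 2 * sin (x / 2) * cos (x / 2) := by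
  rw [← sin_two_mul, mul_div_cancel₀ x two_ne_zero]

lemma hasDerivAt_trigBSplineCore_self (h : ℝ) :
    HasDerivAt (trigBSplineCore h) (3 / 2 * sin (h / 2) ^ 2 * cos (h / 2)) h := by
  refine (hasDerivAt_trigBSplineCore h h).congr_deriv ?_
  rw [show (2 * h - h) / 2 = h / 2 by ring, show (3 * h - h) / 2 = h by ring, sub_self, zero_div,
    sin_zero, cos_zero, sin_eq_two_mul_sin_half_mul_cos_half h]
  ring

lemma hasDerivAt_trigBSplineCore_two_mul (h : ℝ) :
    HasDerivAt (trigBSplineCore h) 0 (2 * h) := by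
  refine (hasDerivAt_trigBSplineCore h (2 * h)).congr_deriv ?_
  rw [show 2 * h / 2 = h by ring, show (2 * h - h) / 2 = h / 2 by ring,
    show (3 * h - 2 * h) / 2 = h / 2 by ring, show (4 * h - 2 * h) / 2 = h by ring, sub_self,
    zero_div, sin_zero, cos_zero, sin_eq_two_mul_sin_half_mul_cos_half h]
  ring

section Unscaled

variable {h : ℝ}

lemma unscaledTrigBSpline_eqOn_edge : EqOn (unscaledTrigBSpline h) trigBSplineEdge (Icc 0 h) :=
  fun _ hx => if_pos hx

lemma unscaledTrigBSpline_eqOn_core :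
    EqOn (unscaledTrigBSpline h) (trigBSplineCore h) (Icc h (2 * h)) := by
  intro x hx
  rcases hx.1.eq_or_lt with rfl | hlt
  · rw [unscaledTrigBSpline, if_pos ⟨by linarith [hx.2], le_rfl⟩, trigBSplineCore_self]
  · rw [unscaledTrigBSpline, if_neg fun hx' => hlt.not_ge hx'.2, if_pos hx]

lemma unscaledTrigBSpline_eqOn_core_reflect (hh : 0 < h) :
    EqOn (unscaledTrigBSpline h) (fun x => trigBSplineCore h (4 * h - x))
      (Icc (2 * h) (3 * h)) := by
  intro x hx
  have hx0 : x ∉ Icc 0 h := fun hx' => by linarith [hx.1, hx'.2]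
  rcases hx.1.eq_or_lt with rfl | hlt
  · rw [unscaledTrigBSpline, if_neg hx0, if_pos ⟨by linarith, le_rfl⟩]
    dsimp only
    rw [show 4 * h - 2 * h = 2 * h by ring]
  · rw [unscaledTrigBSpline, if_neg hx0, if_neg fun hx' => hlt.not_ge hx'.2, if_pos hx]

lemma unscaledTrigBSpline_eqOn_edge_reflect (hh : 0 < h) :
    EqOn (unscaledTrigBSpline h) (fun x => trigBSplineEdge (4 * h - x))
      (Icc (3 * h) (4 * h)) := by
  intro x hx
  have hx0 : x ∉ Icc 0 h := fun hx' => by linarith [hx.1, hx'.2]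
  have hx1 : x ∉ Icc h (2 * h) := fun hx' => by linarith [hx.1, hx'.2]
  rcases hx.1.eq_or_lt with rfl | hlt
  · rw [unscaledTrigBSpline, if_neg hx0, if_neg hx1, if_pos ⟨by linarith, le_rfl⟩]
    dsimp only
    rw [show 4 * h - 3 * h = h by ring, trigBSplineCore_self]
  · rw [unscaledTrigBSpline, if_neg hx0, if_neg hx1, if_neg fun hx' => hlt.not_ge hx'.2,
      if_pos hx]

theorem unscaledTrigBSpline_hasDerivAt (hh : 0 < h) :
    HasDerivAt (unscaledTrigBSpline h) (3 / 2 * sin (h / 2) ^ 2 * cos (h / 2)) h ∧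
    HasDerivAt (unscaledTrigBSpline h) 0 (2 * h) ∧
    HasDerivAt (unscaledTrigBSpline h) (-(3 / 2 * sin (h / 2) ^ 2 * cos (h / 2))) (3 * h) := by
  have reflect : ∀ {f : ℝ → ℝ} {f' y : ℝ}, HasDerivAt f f' y →
      HasDerivAt (fun x => f (4 * h - x)) (-f') (4 * h - y) := fun hf =>
    .comp_const_sub _ _ (by rwa [sub_sub_cancel])
  refine ⟨?_, ?_, ?_⟩
  · exact hasDerivAt_of_eqOn_Icc hh (by linarith) unscaledTrigBSpline_eqOn_edge
      unscaledTrigBSpline_eqOn_core (hasDerivAt_trigBSplineEdge h)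
      (hasDerivAt_trigBSplineCore_self h)
  · have hcore := hasDerivAt_trigBSplineCore_two_mul h
    have hcore' := reflect hcore
    rw [neg_zero, show 4 * h - 2 * h = 2 * h by ring] at hcore'
    exact hasDerivAt_of_eqOn_Icc (by linarith) (by linarith) unscaledTrigBSpline_eqOn_core
      (unscaledTrigBSpline_eqOn_core_reflect hh) hcore hcore'
  · have hcore := reflect (hasDerivAt_trigBSplineCore_self h)
    have hedge := reflect (hasDerivAt_trigBSplineEdge h)
    rw [show 4 * h - h = 3 * h by ring] at hcore hedge
    exact hasDerivAt_of_eqOn_Icc (by linarith) (by linarith)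
      (unscaledTrigBSpline_eqOn_core_reflect hh) (unscaledTrigBSpline_eqOn_edge_reflect hh)
      hcore hedge

end Unscaled

lemma hasDerivAt_trigBSpline_of_unscaled {h x₀ c d : ℝ} {i j : ℤ}
    (hj : (j : ℝ) = (i - 2 : ℤ) + c) (hd : HasDerivAt (unscaledTrigBSpline h) d (c * h)) :
    HasDerivAt (trigBSpline h x₀ i) (1 / (sin (h / 2) * sin h * sin (3 * h / 2)) * d)
      (knot h x₀ j) := by
  rw [funext (trigBSpline_eq_unscaled h x₀ i)]
  refine (HasDerivAt.comp_sub_const _ _ ?_).const_mul _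
  rwa [knot_eq_mul_add_knot hj, add_sub_cancel_right]

/-- For `0 < h < 2π/3`, the trigonometric cubic B-spline `T_i` is
differentiable at the knots `x_{i-1}`, `x_i`, `x_{i+1}`, with derivative values
`T_i′(x_{i-1}) = (3/4)/sin(3h/2)`, `T_i′(x_i) = 0`, `T_i′(x_{i+1}) = −(3/4)/sin(3h/2)`. -/
theorem trigBSpline_deriv_at_knots (h x₀ : ℝ) (h0 : 0 < h) (h1 : h < 2 * Real.pi / 3)
    (i : ℤ) :
    HasDerivAt (trigBSpline h x₀ i) ((3 / 4) / Real.sin (3 * h / 2)) (knot h x₀ (i - 1)) ∧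
    HasDerivAt (trigBSpline h x₀ i) 0 (knot h x₀ i) ∧
    HasDerivAt (trigBSpline h x₀ i) (-((3 / 4) / Real.sin (3 * h / 2))) (knot h x₀ (i + 1)) := by
  have hs : sin (h / 2) ≠ 0 := (sin_pos_of_pos_of_lt_pi (by linarith) (by linarith [pi_pos])).ne'
  have hc : cos (h / 2) ≠ 0 := (cos_pos_of_mem_Ioo ⟨by linarith, by linarith [pi_pos]⟩).ne'
  have hslope :
      1 / (sin (h / 2) * sin h * sin (3 * h / 2)) * (3 / 2 * sin (h / 2) ^ 2 * cos (h / 2)) =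
        3 / 4 / sin (3 * h / 2) := by
    rw [sin_eq_two_mul_sin_half_mul_cos_half h]
    field_simp
    ring
  obtain ⟨d1, d2, d3⟩ := unscaledTrigBSpline_hasDerivAt h0
  refine ⟨?_, ?_, ?_⟩
  · rw [← hslope]
    exact hasDerivAt_trigBSpline_of_unscaled (c := 1) (by push_cast; ring) (by rwa [one_mul])
  · simpa only [mul_zero] using
      hasDerivAt_trigBSpline_of_unscaled (x₀ := x₀) (i := i) (j := i) (by push_cast; ring) d2
  · rw [← hslope, ← mul_neg]
    exact hasDerivAt_trigBSpline_of_unscaled (by push_cast; ring) d3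
end

section
/- Let 0 < h < 2π/3 and let T_i be the trigonometric cubic B-spline on the uniform knots x_j = x_0 + j·h. Then T_i is twice differentiable at the knots x_{i-1} and x_{i+1}, and its second derivative there equals T_i″(x_{i-1}) = T_i″(x_{i+1}) = 3·(1 + 3·cos(h)) / (16·sin²(h/2)·(2·cos(h/2) + cos(3h/2))). -/
/-!
Near the knots `x_{i-1}` and `x_{i+1}` every piece of `T_i` is a combination of functions
`sin ((x - c) / 2) ^ 3`. A trigonometric identity shows that the two pieces meeting at `x_{i-1}`
differ by `-(4 cos (h/2) cos h / γ) · sin ((x - x_{i-1}) / 2) ^ 3`, which vanishes to third order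
at `x_{i-1}`. So `T_i''(x_{i-1})` is the second derivative there of the outer piece
`γ⁻¹ · sin ((x - x_{i-2}) / 2) ^ 3`, which simplifies to the stated value. The knot `x_{i+1}` is
the mirror image under `x ↦ 2 x_i - x`.
-/

open Real

open Set

theorem hasDerivAt_of_eqOn_Ioc_Ico {f g₁ g₂ : ℝ → ℝ} {l a r L : ℝ}
    (hl : l < a) (hr : a < r) (h₁ : EqOn f g₁ (Ioc l a)) (h₂ : EqOn f g₂ (Ico a r))
    (hg₁ : HasDerivAt g₁ L a) (hg₂ : HasDerivAt g₂ L a) : HasDerivAt f L a := by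
  have hleft : HasDerivWithinAt f L (Iic a) a :=
    hg₁.hasDerivWithinAt.congr_of_eventuallyEq
      (Filter.mem_of_superset (Ioc_mem_nhdsLE hl) h₁) (h₁ ⟨hl, le_rfl⟩)
  have hright : HasDerivWithinAt f L (Ici a) a :=
    hg₂.hasDerivWithinAt.congr_of_eventuallyEq
      (Filter.mem_of_superset (Ico_mem_nhdsGE hr) h₂) (h₂ ⟨le_rfl, hr⟩)
  simpa using hleft.union hright

theorem hasDerivAt_deriv_of_eqOn_Ioc_Ico {f g₁ g₂ : ℝ → ℝ} {l a r L : ℝ}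
    (hl : l < a) (hr : a < r) (h₁ : EqOn f g₁ (Ioc l a)) (h₂ : EqOn f g₂ (Ico a r))
    (hg₁ : Differentiable ℝ g₁) (hg₂ : Differentiable ℝ g₂) (hd : deriv g₁ a = deriv g₂ a)
    (hL₁ : HasDerivAt (deriv g₁) L a) (hL₂ : HasDerivAt (deriv g₂) L a) :
    HasDerivAt (deriv f) L a := by
  have hf : HasDerivAt f (deriv g₁ a) a :=
    hasDerivAt_of_eqOn_Ioc_Ico hl hr h₁ h₂ (hg₁ a).hasDerivAt (hd ▸ (hg₂ a).hasDerivAt)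
  refine hasDerivAt_of_eqOn_Ioc_Ico hl hr (fun x hx => ?_) (fun x hx => ?_) hL₁ hL₂
  · rcases hx.2.lt_or_eq with hxa | rfl
    · exact (h₁.mono Ioo_subset_Ioc_self).deriv isOpen_Ioo ⟨hx.1, hxa⟩
    · exact hf.deriv
  · rcases hx.1.lt_or_eq with hax | rfl
    · exact (h₂.mono Ioo_subset_Ico_self).deriv isOpen_Ioo ⟨hax, hx.2⟩
    · exact hf.deriv.trans hd

noncomputable def sinCube (c x : ℝ) : ℝ := sin ((x - c) / 2) ^ 3

theorem sinCube_eq_neg (c x : ℝ) : sinCube c x = -sin ((c - x) / 2) ^ 3 := by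
  rw [sinCube, ← neg_sub c x, neg_div, sin_neg, Odd.neg_pow (by decide)]

theorem hasDerivAt_sinCube (c x : ℝ) :
    HasDerivAt (sinCube c) (3 / 2 * sin ((x - c) / 2) ^ 2 * cos ((x - c) / 2)) x :=
  (((hasDerivAt_id' x).sub_const c).div_const 2).sin.fun_pow 3 |>.congr_deriv
    (by push_cast; ring)

theorem deriv_sinCube (c : ℝ) :
    deriv (sinCube c) = fun x => 3 / 2 * sin ((x - c) / 2) ^ 2 * cos ((x - c) / 2) :=
  funext fun x => (hasDerivAt_sinCube c x).deriv

theorem hasDerivAt_deriv_sinCube (c x : ℝ) :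
    HasDerivAt (deriv (sinCube c))
      (3 / 4 * sin ((x - c) / 2) * (2 * cos ((x - c) / 2) ^ 2 - sin ((x - c) / 2) ^ 2)) x := by
  have hθ := ((hasDerivAt_id' x).sub_const c).div_const 2
  rw [deriv_sinCube]
  exact ((hθ.sin.fun_pow 2).const_mul (3 / 2)).mul hθ.cos |>.congr_deriv (by push_cast; ring)

theorem hasDerivAt_deriv_of_eqOn_sinCube {f : ℝ → ℝ} {l a r c κ k₁ k₂ : ℝ}
    (hl : l < a) (hr : a < r)
    (h₁ : EqOn f (fun x => κ * sinCube c x + k₁ * sinCube a x) (Ioc l a))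
    (h₂ : EqOn f (fun x => κ * sinCube c x + k₂ * sinCube a x) (Ico a r)) :
    HasDerivAt (deriv f)
      (κ * (3 / 4 * sin ((a - c) / 2) * (2 * cos ((a - c) / 2) ^ 2 - sin ((a - c) / 2) ^ 2)))
      a := by
  have hg : ∀ k x, HasDerivAt (fun x => κ * sinCube c x + k * sinCube a x)
      (κ * (3 / 2 * sin ((x - c) / 2) ^ 2 * cos ((x - c) / 2))
        + k * (3 / 2 * sin ((x - a) / 2) ^ 2 * cos ((x - a) / 2))) x := fun k x =>
    ((hasDerivAt_sinCube c x).const_mul κ).add ((hasDerivAt_sinCube a x).const_mul k)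
  have hderiv : ∀ k, deriv (fun x => κ * sinCube c x + k * sinCube a x)
      = fun x => κ * deriv (sinCube c) x + k * deriv (sinCube a) x := fun k =>
    funext fun x => by rw [(hg k x).deriv, deriv_sinCube, deriv_sinCube]
  have hL : ∀ k, HasDerivAt (deriv fun x => κ * sinCube c x + k * sinCube a x)
      (κ * (3 / 4 * sin ((a - c) / 2) * (2 * cos ((a - c) / 2) ^ 2 - sin ((a - c) / 2) ^ 2)))
      a := fun k => by
    rw [hderiv]
    exact ((hasDerivAt_deriv_sinCube c a).const_mul κ).add
      ((hasDerivAt_deriv_sinCube a a).const_mul k) |>.congr_deriv (by simp)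
  exact hasDerivAt_deriv_of_eqOn_Ioc_Ico hl hr h₁ h₂ (fun x => (hg k₁ x).differentiableAt)
    (fun x => (hg k₂ x).differentiableAt) (by simp [hderiv, deriv_sinCube]) (hL k₁) (hL k₂)

theorem trigBSpline_adjacent_pieces_identity (v θ : ℝ) :
    sin (v + θ) * (sin (v + θ) * sin (θ - v) + sin (2 * θ - v) * sin v)
        + sin (3 * θ - v) * sin v ^ 2
      = sin (v + θ) ^ 3 - 4 * cos θ * cos (2 * θ) * sin v ^ 3 := by
  simp only [sin_add, sin_sub, sin_two_mul, cos_two_mul, sin_three_mul, cos_three_mul]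
  linear_combination (-4 * sin v ^ 2 * cos v * sin θ) * sin_sq_add_cos_sq θ

theorem knot_add (h x₀ : ℝ) (i k : ℤ) : knot h x₀ (i + k) = knot h x₀ i + k * h := by
  simp only [knot]; push_cast; ring

theorem knot_sub (h x₀ : ℝ) (i k : ℤ) : knot h x₀ (i - k) = knot h x₀ i - k * h := by
  simp only [knot]; push_cast; ring

noncomputable def trigBSplineGamma (h : ℝ) : ℝ := sin (h / 2) * sin h * sin (3 * h / 2)

theorem trigBSpline_eqOn_first (h x₀ : ℝ) (i : ℤ) :
    EqOn (trigBSpline h x₀ i)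
      (fun x => (trigBSplineGamma h)⁻¹ * sinCube (knot h x₀ i - 2 * h) x)
      (Icc (knot h x₀ i - 2 * h) (knot h x₀ i - h)) := by
  intro x hx
  simp only [trigBSpline, knot_add, knot_sub, Int.cast_ofNat, Int.cast_one, one_mul]
  rw [if_pos hx, sinCube, trigBSplineGamma, one_div]

theorem trigBSpline_eqOn_second (h x₀ : ℝ) (i : ℤ) :
    EqOn (trigBSpline h x₀ i)
      (fun x => (trigBSplineGamma h)⁻¹ * sinCube (knot h x₀ i - 2 * h) x
        + (-4 * cos (h / 2) * cos h / trigBSplineGamma h) * sinCube (knot h x₀ i - h) x)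
      (Icc (knot h x₀ i - h) (knot h x₀ i)) := by
  intro x hx
  simp only [trigBSpline, knot_add, knot_sub, Int.cast_ofNat, Int.cast_one, one_mul]
  set m := knot h x₀ i
  by_cases hx' : x ∈ Icc (m - 2 * h) (m - h)
  · obtain rfl : x = m - h := le_antisymm hx'.2 hx.1
    rw [if_pos hx']
    simp [sinCube, trigBSplineGamma]
  · rw [if_neg hx', if_pos hx]
    have key := trigBSpline_adjacent_pieces_identity ((x - (m - h)) / 2) (h / 2)
    simp only [sinCube, ← trigBSplineGamma.eq_1]
    ring_nf at key ⊢
    linear_combination (trigBSplineGamma h)⁻¹ * key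

theorem trigBSpline_eqOn_third (h x₀ : ℝ) (h0 : 0 < h) (i : ℤ) :
    EqOn (trigBSpline h x₀ i)
      (fun x => -(trigBSplineGamma h)⁻¹ * sinCube (knot h x₀ i + 2 * h) x
        + (4 * cos (h / 2) * cos h / trigBSplineGamma h) * sinCube (knot h x₀ i + h) x)
      (Ioc (knot h x₀ i) (knot h x₀ i + h)) := by
  intro x hx
  simp only [trigBSpline, knot_add, knot_sub, Int.cast_ofNat, Int.cast_one, one_mul]
  set m := knot h x₀ i
  rw [if_neg fun hx' => by linarith [hx.1, hx'.2], if_neg fun hx' => by linarith [hx.1, hx'.2],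
    if_pos ⟨hx.1.le, hx.2⟩]
  have key := trigBSpline_adjacent_pieces_identity ((m + h - x) / 2) (h / 2)
  simp only [sinCube_eq_neg, ← trigBSplineGamma.eq_1]
  ring_nf at key ⊢
  linear_combination (trigBSplineGamma h)⁻¹ * key

theorem trigBSpline_eqOn_fourth (h x₀ : ℝ) (h0 : 0 < h) (i : ℤ) :
    EqOn (trigBSpline h x₀ i)
      (fun x => -(trigBSplineGamma h)⁻¹ * sinCube (knot h x₀ i + 2 * h) x)
      (Icc (knot h x₀ i + h) (knot h x₀ i + 2 * h)) := by
  intro x hx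
  rcases hx.1.eq_or_lt with rfl | hlt
  · rw [trigBSpline_eqOn_third h x₀ h0 i ⟨by linarith, le_rfl⟩]
    simp [sinCube]
  simp only [trigBSpline, knot_add, knot_sub, Int.cast_ofNat, Int.cast_one, one_mul]
  rw [if_neg fun hx' => by linarith [hx'.2], if_neg fun hx' => by linarith [hx'.2],
    if_neg fun hx' => by linarith [hx'.2], if_pos hx, sinCube_eq_neg, trigBSplineGamma]
  ring

theorem inv_trigBSplineGamma_mul_eq (h : ℝ) :
    (trigBSplineGamma h)⁻¹ * (3 / 4 * sin (h / 2) * (2 * cos (h / 2) ^ 2 - sin (h / 2) ^ 2))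
      = 3 * (1 + 3 * cos h) / (16 * sin (h / 2) ^ 2 * (2 * cos (h / 2) + cos (3 * h / 2))) := by
  obtain ⟨θ, rfl⟩ : ∃ θ, h = 2 * θ := ⟨h / 2, by ring⟩
  have hθ : 2 * θ / 2 = θ := by ring
  have h3θ : 3 * (2 * θ) / 2 = 3 * θ := by ring
  simp only [trigBSplineGamma, hθ, h3θ, sin_two_mul, cos_two_mul, sin_three_mul, cos_three_mul]
  have hγ : sin θ * (2 * sin θ * cos θ) * (3 * sin θ - 4 * sin θ ^ 3)
      = 2 * sin θ * (sin θ ^ 2 * (2 * cos θ + (4 * cos θ ^ 3 - 3 * cos θ))) := by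
    linear_combination (-8 * sin θ ^ 3 * cos θ) * sin_sq_add_cos_sq θ
  have hnum : 2 * cos θ ^ 2 - sin θ ^ 2 = (1 + 3 * (2 * cos θ ^ 2 - 1)) / 2 := by
    linear_combination (-1) * sin_sq_add_cos_sq θ
  rw [hγ, hnum]
  generalize 2 * cos θ + (4 * cos θ ^ 3 - 3 * cos θ) = F
  generalize 1 + 3 * (2 * cos θ ^ 2 - 1) = N
  -- if `sin θ = 0`, both sides are `0` by the convention `x / 0 = 0`
  rcases eq_or_ne (sin θ) 0 with hs | hs
  · simp [hs]
  · rw [← mul_div_mul_left (3 * N) _ hs]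
    ring

theorem trigBSpline_secondDeriv_adjacent_general (h x₀ : ℝ) (h0 : 0 < h)
    (i : ℤ) :
    HasDerivAt (deriv (trigBSpline h x₀ i))
      (3 * (1 + 3 * Real.cos h) /
        (16 * Real.sin (h / 2) ^ 2 * (2 * Real.cos (h / 2) + Real.cos (3 * h / 2))))
      (knot h x₀ (i - 1)) ∧
    HasDerivAt (deriv (trigBSpline h x₀ i))
      (3 * (1 + 3 * Real.cos h) /
        (16 * Real.sin (h / 2) ^ 2 * (2 * Real.cos (h / 2) + Real.cos (3 * h / 2))))
      (knot h x₀ (i + 1)) := by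
  rw [knot_sub, knot_add, Int.cast_one, one_mul, ← inv_trigBSplineGamma_mul_eq]
  set m := knot h x₀ i
  constructor
  · have := hasDerivAt_deriv_of_eqOn_sinCube (l := m - 2 * h) (r := m) (k₁ := 0)
      (by linarith) (by linarith)
      (fun x hx => by simp [trigBSpline_eqOn_first h x₀ i (Ioc_subset_Icc_self hx)])
      ((trigBSpline_eqOn_second h x₀ i).mono Ico_subset_Icc_self)
    rwa [show (m - h - (m - 2 * h)) / 2 = h / 2 by ring] at this
  · have := hasDerivAt_deriv_of_eqOn_sinCube (l := m) (r := m + 2 * h) (k₂ := 0)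
      (by linarith) (by linarith)
      (trigBSpline_eqOn_third h x₀ h0 i)
      (fun x hx => by simp [trigBSpline_eqOn_fourth h x₀ h0 i (Ico_subset_Icc_self hx)])
    rw [show (m + h - (m + 2 * h)) / 2 = -(h / 2) by ring, sin_neg, cos_neg] at this
    convert this using 1
    ring

/-- For `0 < h < 2π/3`, the trigonometric cubic B-spline `T_i` is twice
differentiable at the knots `x_{i-1}` and `x_{i+1}`, with second derivative
`T_i″(x_{i-1}) = T_i″(x_{i+1}) = 3·(1 + 3·cos(h)) / (16·sin²(h/2)·(2·cos(h/2) + cos(3h/2)))`. -/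
theorem trigBSpline_secondDeriv_adjacent (h x₀ : ℝ) (h0 : 0 < h) (h1 : h < 2 * Real.pi / 3)
    (i : ℤ) :
    HasDerivAt (deriv (trigBSpline h x₀ i))
      (3 * (1 + 3 * Real.cos h) /
        (16 * Real.sin (h / 2) ^ 2 * (2 * Real.cos (h / 2) + Real.cos (3 * h / 2))))
      (knot h x₀ (i - 1)) ∧
    HasDerivAt (deriv (trigBSpline h x₀ i))
      (3 * (1 + 3 * Real.cos h) /
        (16 * Real.sin (h / 2) ^ 2 * (2 * Real.cos (h / 2) + Real.cos (3 * h / 2))))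
      (knot h x₀ (i + 1)) :=
  trigBSpline_secondDeriv_adjacent_general h x₀ h0 i
end

section
/- Let 0 < h < 2π/3, let N ≥ 1, let x_j = x_0 + j·h, and let T_{-1}, T_0, …, T_{N+1} be the trigonometric cubic B-splines on these knots. Then the restrictions of T_{-1}, T_0, …, T_{N+1} to the interval [x_0, x_N] are linearly independent: if real numbers δ_{-1}, …, δ_{N+1} satisfy Σ_{i=-1}^{N+1} δ_i·T_i(x) = 0 for all x ∈ [x_0, x_N], then δ_i = 0 for every i with −1 ≤ i ≤ N+1. -/
open Real

/-!
On a knot interval `[x_j, x_{j+1}]` only `T_{j-1}, …, T_{j+2}` are nonzero, and there each is a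
trigonometric polynomial. A vanishing combination is therefore a real-analytic function vanishing on
an open interval, hence everywhere, and evaluating it at the knots `x_{j-1}, …, x_{j+2}` gives a
4 × 4 linear system for `δ_{j-1}, …, δ_{j+2}`. The system is invariant under the reflection
`x ↦ x_j + x_{j+1} - x`; its symmetric and antisymmetric parts are 2 × 2 systems, both of
determinant `-12 c² (4 c² - 1)` with `c = cos (h / 2) ∈ (1/2, 1)`. Every `δ_i` with
`-1 ≤ i ≤ N + 1` lies in such a window with `0 ≤ j ≤ N - 1`.
-/

lemma sin_three_mul_eq_sin_mul_cos_sq (θ : ℝ) : sin (3 * θ) = sin θ * (4 * cos θ ^ 2 - 1) := by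
  rw [sin_three_mul]
  linear_combination (-4 * sin θ) * sin_sq_add_cos_sq θ

lemma sin_four_mul_eq_sin_mul_cos (θ : ℝ) :
    sin (4 * θ) = 4 * sin θ * cos θ * (2 * cos θ ^ 2 - 1) := by
  rw [show 4 * θ = 2 * (2 * θ) by ring, sin_two_mul, sin_two_mul, cos_two_mul]
  ring

noncomputable def trigBSplineScale (h : ℝ) : ℝ := sin (h / 2) * sin h * sin (3 * h / 2)

lemma trigBSplineScale_pos {h : ℝ} (h0 : 0 < h) (h1 : h < 2 * π / 3) : 0 < trigBSplineScale h := by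
  have := pi_pos
  unfold trigBSplineScale
  exact mul_pos (mul_pos (sin_pos_of_pos_of_lt_pi (by linarith) (by linarith))
    (sin_pos_of_pos_of_lt_pi h0 (by linarith)))
    (sin_pos_of_pos_of_lt_pi (by linarith) (by linarith))

lemma knot_strictMono {h : ℝ} (h0 : 0 < h) (x₀ : ℝ) : StrictMono (knot h x₀) := by
  intro a b hab
  unfold knot
  gcongr

lemma knot_add_one (h x₀ : ℝ) (j : ℤ) : knot h x₀ (j + 1) = knot h x₀ j + h := by
  simp only [knot]; push_cast; ring

noncomputable def bsplinePiece₂ (θ t : ℝ) : ℝ :=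
  sin (t + θ) * (sin (t + θ) * sin (θ - t) + sin (2 * θ - t) * sin t) + sin (3 * θ - t) * sin t ^ 2

noncomputable def bsplinePiece₃ (θ t : ℝ) : ℝ :=
  sin (t + 2 * θ) * sin (θ - t) ^ 2
    + sin (2 * θ - t) * (sin (t + θ) * sin (θ - t) + sin (2 * θ - t) * sin t)

/-- `γ · Σ δ_i T_i` on `[x_j, x_{j+1}]` in the coordinate `x = x_j + 2 t`, with `θ = h / 2` and
`a, b, c, d = δ_{j-1}, δ_j, δ_{j+1}, δ_{j+2}`: the four terms are the fourth, third, second and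
first pieces of the B-splines. -/
noncomputable def localSpline (θ a b c d t : ℝ) : ℝ :=
  a * sin (θ - t) ^ 3 + b * bsplinePiece₃ θ t + c * bsplinePiece₂ θ t + d * sin t ^ 3

section KnotInterval

variable {h x₀ t : ℝ} {j : ℤ}

lemma knot_add_two_mul_mem_Ioo (ht : t ∈ Set.Ioo 0 (h / 2)) :
    knot h x₀ j + 2 * t ∈ Set.Ioo (knot h x₀ j) (knot h x₀ (j + 1)) := by
  rw [knot_add_one]
  constructor <;> linarith [ht.1, ht.2]

lemma knot_add_two_mul_mem_Icc_iff (h0 : 0 < h) (ht : t ∈ Set.Ioo 0 (h / 2)) {a b : ℤ} :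
    knot h x₀ j + 2 * t ∈ Set.Icc (knot h x₀ a) (knot h x₀ b) ↔ a ≤ j ∧ j + 1 ≤ b := by
  have hmono := (knot_strictMono h0 x₀).monotone
  obtain ⟨hlo, hhi⟩ := knot_add_two_mul_mem_Ioo (x₀ := x₀) (j := j) ht
  constructor
  · rintro ⟨ha, hb⟩
    constructor
    · by_contra! hja
      linarith [hmono (show j + 1 ≤ a by omega)]
    · by_contra! hbj
      linarith [hmono (show b ≤ j by omega)]
  · rintro ⟨ha, hb⟩
    exact ⟨(hmono ha).trans hlo.le, hhi.le.trans (hmono hb)⟩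

lemma trigBSpline_eq_zero_of_notMem_Icc (h0 : 0 < h) (ht : t ∈ Set.Ioo 0 (h / 2)) {i : ℤ}
    (hi : i ∉ Finset.Icc (j - 1) (j + 2)) : trigBSpline h x₀ i (knot h x₀ j + 2 * t) = 0 := by
  rw [Finset.mem_Icc] at hi
  simp only [trigBSpline, knot_add_two_mul_mem_Icc_iff h0 ht]
  split_ifs <;> first | rfl | omega

lemma trigBSpline_sub_one_eq_piece (h0 : 0 < h) (ht : t ∈ Set.Ioo 0 (h / 2)) :
    trigBSpline h x₀ (j - 1) (knot h x₀ j + 2 * t) = sin (h / 2 - t) ^ 3 / trigBSplineScale h := by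
  simp only [trigBSpline, knot_add_two_mul_mem_Icc_iff h0 ht]
  rw [if_neg (by omega), if_neg (by omega), if_neg (by omega), if_pos (by omega)]
  simp only [knot, trigBSplineScale]
  push_cast
  ring_nf

lemma trigBSpline_self_eq_piece (h0 : 0 < h) (ht : t ∈ Set.Ioo 0 (h / 2)) :
    trigBSpline h x₀ j (knot h x₀ j + 2 * t) = bsplinePiece₃ (h / 2) t / trigBSplineScale h := by
  simp only [trigBSpline, knot_add_two_mul_mem_Icc_iff h0 ht]
  rw [if_neg (by omega), if_neg (by omega), if_pos (by omega)]
  simp only [knot, trigBSplineScale, bsplinePiece₃]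
  push_cast
  ring_nf

lemma trigBSpline_add_one_eq_piece (h0 : 0 < h) (ht : t ∈ Set.Ioo 0 (h / 2)) :
    trigBSpline h x₀ (j + 1) (knot h x₀ j + 2 * t) =
      bsplinePiece₂ (h / 2) t / trigBSplineScale h := by
  simp only [trigBSpline, knot_add_two_mul_mem_Icc_iff h0 ht]
  rw [if_neg (by omega), if_pos (by omega)]
  simp only [knot, trigBSplineScale, bsplinePiece₂]
  push_cast
  ring_nf

lemma trigBSpline_add_two_eq_piece (h0 : 0 < h) (ht : t ∈ Set.Ioo 0 (h / 2)) :
    trigBSpline h x₀ (j + 2) (knot h x₀ j + 2 * t) = sin t ^ 3 / trigBSplineScale h := by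
  simp only [trigBSpline, knot_add_two_mul_mem_Icc_iff h0 ht]
  rw [if_pos (by omega)]
  simp only [knot, trigBSplineScale]
  push_cast
  ring_nf

lemma sum_mul_trigBSpline_eq_localSpline (h0 : 0 < h) (ht : t ∈ Set.Ioo 0 (h / 2)) (δ : ℤ → ℝ)
    {s : Finset ℤ} (hs : Finset.Icc (j - 1) (j + 2) ⊆ s) :
    ∑ i ∈ s, δ i * trigBSpline h x₀ i (knot h x₀ j + 2 * t) =
      localSpline (h / 2) (δ (j - 1)) (δ j) (δ (j + 1)) (δ (j + 2)) t / trigBSplineScale h := by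
  rw [← Finset.sum_subset hs fun i _ hi => by
    rw [trigBSpline_eq_zero_of_notMem_Icc h0 ht hi, mul_zero]]
  rw [show Finset.Icc (j - 1) (j + 2) = {j - 1, j, j + 1, j + 2} by
      ext; simp only [Finset.mem_Icc, Finset.mem_insert, Finset.mem_singleton]; omega,
    Finset.sum_insert (by simp only [Finset.mem_insert, Finset.mem_singleton]; omega),
    Finset.sum_insert (by simp), Finset.sum_insert (by simp), Finset.sum_singleton,
    trigBSpline_sub_one_eq_piece h0 ht, trigBSpline_self_eq_piece h0 ht,
    trigBSpline_add_one_eq_piece h0 ht, trigBSpline_add_two_eq_piece h0 ht, localSpline]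
  ring

end KnotInterval

section LocalSpline

variable {θ a b c d : ℝ}

lemma analyticOnNhd_localSpline : AnalyticOnNhd ℝ (localSpline θ a b c d) Set.univ := by
  intro t _
  unfold localSpline bsplinePiece₂ bsplinePiece₃
  fun_prop

lemma localSpline_eq_zero_of_eqOn_Ioo (hθ : 0 < θ)
    (hzero : Set.EqOn (localSpline θ a b c d) 0 (Set.Ioo 0 θ)) : localSpline θ a b c d = 0 :=
  analyticOnNhd_localSpline.eq_of_eventuallyEq analyticOnNhd_const
    (Filter.eventuallyEq_of_mem (Ioo_mem_nhds (half_pos hθ) (half_lt_self hθ)) hzero)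

lemma localSpline_sub (t : ℝ) : localSpline θ a b c d (θ - t) = localSpline θ d c b a t := by
  simp only [localSpline, bsplinePiece₂, bsplinePiece₃]
  ring_nf

lemma localSpline_zero : localSpline θ a b c d 0 = sin θ ^ 3 * (a + 4 * cos θ * b + c) := by
  simp only [localSpline, bsplinePiece₂, bsplinePiece₃, sub_zero, zero_add, sin_zero, sin_two_mul]
  ring

lemma localSpline_neg_self : localSpline θ a b c d (-θ) = sin θ ^ 3 *
    (8 * cos θ ^ 3 * a + (4 * cos θ ^ 2 - (4 * cos θ ^ 2 - 1) ^ 2) * b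
      + 4 * cos θ * (2 * cos θ ^ 2 - 1) * c - d) := by
  simp only [localSpline, bsplinePiece₂, bsplinePiece₃, show θ - -θ = 2 * θ by ring,
    show -θ + θ = 0 by ring, show -θ + 2 * θ = θ by ring, show 2 * θ - -θ = 3 * θ by ring,
    show 3 * θ - -θ = 4 * θ by ring, sin_zero, sin_neg, sin_two_mul,
    sin_three_mul_eq_sin_mul_cos_sq, sin_four_mul_eq_sin_mul_cos]
  ring

lemma localSpline_coeffs_eq_zero (hθ₀ : 0 < θ) (hθ : θ < π / 3)
    (hzero : ∀ t, localSpline θ a b c d t = 0) : a = 0 ∧ b = 0 ∧ c = 0 ∧ d = 0 := by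
  have hsin : sin θ ^ 3 ≠ 0 :=
    pow_ne_zero 3 (sin_pos_of_pos_of_lt_pi hθ₀ (by linarith [pi_pos])).ne'
  have hcos : 1 / 2 < cos θ := by
    rw [← cos_pi_div_three]
    exact cos_lt_cos_of_nonneg_of_le_pi hθ₀.le (by linarith [pi_pos]) hθ
  have E₁ := hzero (-θ)
  have E₂ := hzero 0
  have E₃ := hzero (θ - 0)
  have E₄ := hzero (θ - -θ)
  rw [localSpline_sub] at E₃ E₄
  rw [localSpline_neg_self, mul_eq_zero, or_iff_right hsin] at E₁ E₄
  rw [localSpline_zero, mul_eq_zero, or_iff_right hsin] at E₂ E₃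
  have hdet : cos θ ^ 2 * (4 * cos θ ^ 2 - 1) ≠ 0 := by nlinarith
  have hsymm : cos θ ^ 2 * (4 * cos θ ^ 2 - 1) * (b + c) = 0 := by
    linear_combination (-1 / 12 : ℝ) * (E₁ + E₄ - (8 * cos θ ^ 3 - 1) * (E₂ + E₃))
  have hanti : cos θ ^ 2 * (4 * cos θ ^ 2 - 1) * (b - c) = 0 := by
    linear_combination (-1 / 12 : ℝ) * (E₁ - E₄ - (8 * cos θ ^ 3 + 1) * (E₂ - E₃))
  have hb : b = 0 := by
    linarith [(mul_eq_zero.1 hsymm).resolve_left hdet, (mul_eq_zero.1 hanti).resolve_left hdet]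
  have hc : c = 0 := by
    linarith [(mul_eq_zero.1 hsymm).resolve_left hdet, (mul_eq_zero.1 hanti).resolve_left hdet]
  subst hb hc
  exact ⟨by linarith, rfl, rfl, by linarith⟩

end LocalSpline

lemma coeff_eq_zero_of_sum_mul_trigBSpline_eq_zero {h x₀ : ℝ} (h0 : 0 < h)
    (h1 : h < 2 * π / 3) (δ : ℤ → ℝ) {s : Finset ℤ} {j : ℤ} (hs : Finset.Icc (j - 1) (j + 2) ⊆ s)
    (hzero : ∀ x ∈ Set.Ioo (knot h x₀ j) (knot h x₀ (j + 1)),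
      ∑ i ∈ s, δ i * trigBSpline h x₀ i x = 0)
    {i : ℤ} (hi₁ : j - 1 ≤ i) (hi₂ : i ≤ j + 2) : δ i = 0 := by
  have hloc : localSpline (h / 2) (δ (j - 1)) (δ j) (δ (j + 1)) (δ (j + 2)) = 0 :=
    localSpline_eq_zero_of_eqOn_Ioo (half_pos h0) fun t ht => by
      have := hzero _ (knot_add_two_mul_mem_Ioo ht)
      rwa [sum_mul_trigBSpline_eq_localSpline h0 ht δ hs, div_eq_zero_iff,
        or_iff_left (trigBSplineScale_pos h0 h1).ne'] at this
  obtain ⟨hδ₁, hδ₂, hδ₃, hδ₄⟩ :=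
    localSpline_coeffs_eq_zero (half_pos h0) (by linarith) (congrFun hloc)
  obtain rfl | rfl | rfl | rfl : i = j - 1 ∨ i = j ∨ i = j + 1 ∨ i = j + 2 := by omega
  exacts [hδ₁, hδ₂, hδ₃, hδ₄]

/-- For `0 < h < 2π/3` and `N ≥ 1`, the restrictions of the trigonometric
cubic B-splines `T_{-1}, T_0, …, T_{N+1}` to `[x_0, x_N]` are linearly independent: if
`Σ_{i=-1}^{N+1} δᵢ·T_i(x) = 0` for all `x ∈ [x_0, x_N]`, then all `δᵢ = 0`. -/
theorem trigBSpline_linearIndependent (h x₀ : ℝ) (h0 : 0 < h) (h1 : h < 2 * Real.pi / 3)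
    (N : ℕ) (hN : 1 ≤ N) (δ : ℤ → ℝ)
    (hzero : ∀ x ∈ Set.Icc (knot h x₀ 0) (knot h x₀ (N : ℤ)),
      ∑ i ∈ Finset.Icc (-1 : ℤ) (N + 1), δ i * trigBSpline h x₀ i x = 0) :
    ∀ i : ℤ, -1 ≤ i → i ≤ (N : ℤ) + 1 → δ i = 0 := by
  intro i hi₁ hi₂
  have hmono := (knot_strictMono h0 x₀).monotone
  refine coeff_eq_zero_of_sum_mul_trigBSpline_eq_zero h0 h1 δ (j := max 0 (min (i - 1) (N - 1)))
    (Finset.Icc_subset_Icc (by omega) (by omega)) (fun x hx => hzero x ?_) (by omega) (by omega)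
  exact Set.Icc_subset_Icc (hmono (by omega)) (hmono (by omega)) (Set.Ioo_subset_Icc_self hx)
end

section
/- Let b, x₀ ∈ ℝ, let k = (1/2)·√(11/19) and d = √(11/19), and define u : ℝ × ℝ → ℝ by u(x, t) = b + (15/19)·d·(−9·tanh(k·(x − b·t − x₀)) + 11·tanh³(k·(x − b·t − x₀))). Then u is a classical solution of the Kuramoto–Sivashinsky equation with α = 1 and θ = 1: for all (x, t) ∈ ℝ × ℝ, ∂u/∂t + u·∂u/∂x + ∂²u/∂x² + ∂⁴u/∂x⁴ = 0. -/
/-! `u` is a traveling wave `b + φ (k (x - b t - x₀))` with `φ = (15/19) d · P ∘ tanh`,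
`P = -9 X + 11 X³`. Its speed equals the constant background `b`, so `u_t + u u_x` collapses to
`k φ φ'` and the equation becomes the ODE `k φ φ' + k² φ'' + k⁴ φ'''' = 0`. Since
`tanh' = 1 - tanh²`, every derivative of `Q (tanh s)` is again of the form `Q' (1 - X²)` evaluated
at `tanh s`, so the ODE is a polynomial identity in `tanh`. -/

open Real Polynomial

theorem Real.hasDerivAt_tanh (y : ℝ) : HasDerivAt tanh (1 - tanh y ^ 2) y := by
  have h := (hasDerivAt_sinh y).div (hasDerivAt_cosh y) (cosh_pos y).ne'
  rw [show tanh = sinh / cosh from funext tanh_eq_sinh_div_cosh]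
  refine h.congr_deriv ?_
  rw [Pi.div_apply]
  field_simp

/-- Under `s ↦ P (tanh s)`, differentiation in `s` acts on `P` as `P ↦ P' · (1 - X²)`. -/
noncomputable def tanhDerivative (P : ℝ[X]) : ℝ[X] := derivative P * (1 - X ^ 2)

theorem hasDerivAt_eval_tanh (P : ℝ[X]) (s : ℝ) :
    HasDerivAt (fun s => P.eval (tanh s)) ((tanhDerivative P).eval (tanh s)) s :=
  ((P.hasDerivAt (tanh s)).comp s (hasDerivAt_tanh s)).congr_deriv
    (by simp [tanhDerivative])

theorem deriv_eval_tanh_affine (P : ℝ[X]) (k c : ℝ) :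
    deriv (fun ξ => P.eval (tanh (k * ξ + c))) =
      fun ξ => k * (tanhDerivative P).eval (tanh (k * ξ + c)) := by
  funext ξ
  have hinner : HasDerivAt (fun ξ => k * ξ + c) k ξ := by
    simpa using ((hasDerivAt_id ξ).const_mul k).add_const c
  exact ((hasDerivAt_eval_tanh P (k * ξ + c)).comp ξ hinner).deriv.trans (mul_comm _ _)

theorem iteratedDeriv_eval_tanh_affine (P : ℝ[X]) (k c : ℝ) (n : ℕ) :
    iteratedDeriv n (fun ξ => P.eval (tanh (k * ξ + c))) =
      fun ξ => k ^ n * (tanhDerivative^[n] P).eval (tanh (k * ξ + c)) := by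
  induction n generalizing P with
  | zero => simp
  | succ n ih =>
    funext ξ
    rw [iteratedDeriv_succ', deriv_eval_tanh_affine, iteratedDeriv_const_mul_field, ih,
      Function.iterate_succ_apply, pow_succ']
    ring

noncomputable def ksProfile : ℝ[X] := -9 * X + 11 * X ^ 3

/-- The traveling-wave ODE for `(15/19) d · ksProfile ∘ tanh` with `k = d / 2`, divided by
`(15/38) d³` and with `d² = 11/19` substituted. -/
theorem ksProfile_identity (T : ℝ) :
    15 / 19 * ksProfile.eval T * (tanhDerivative ksProfile).eval T
      + 1 / 2 * (tanhDerivative^[2] ksProfile).eval T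
      + 11 / 152 * (tanhDerivative^[4] ksProfile).eval T = 0 := by
  simp only [Function.iterate_succ_apply', Function.iterate_zero_apply, ksProfile,
    tanhDerivative, derivative_mul, derivative_add, derivative_sub, derivative_X_pow,
    derivative_X, derivative_one, derivative_ofNat, derivative_neg, derivative_C,
    derivative_zero, eval_mul, eval_add, eval_sub, eval_pow, eval_X, eval_C, eval_one,
    eval_ofNat, eval_neg, eval_zero]
  ring

section TravelingWave

variable {P : ℝ[X]} {A b k v x₀ x t : ℝ}

theorem iteratedDeriv_tanh_wave_space {n : ℕ} (hn : 0 < n) :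
    iteratedDeriv n (fun ξ => b + A * P.eval (tanh (k * (ξ - v * t - x₀)))) x =
      A * (k ^ n * (tanhDerivative^[n] P).eval (tanh (k * (x - v * t - x₀)))) := by
  have hwave : (fun ξ => b + A * P.eval (tanh (k * (ξ - v * t - x₀)))) =
      fun ξ => b + A * P.eval (tanh (k * ξ + -(k * (v * t + x₀)))) := by
    funext ξ; ring_nf
  rw [hwave, iteratedDeriv_const_add hn, iteratedDeriv_const_mul_field,
    iteratedDeriv_eval_tanh_affine]
  ring_nf

theorem deriv_tanh_wave_time :
    deriv (fun τ => b + A * P.eval (tanh (k * (x - v * τ - x₀)))) t =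
      A * (-(k * v) * (tanhDerivative P).eval (tanh (k * (x - v * t - x₀)))) := by
  have hwave : (fun τ => b + A * P.eval (tanh (k * (x - v * τ - x₀)))) =
      fun τ => b + A * P.eval (tanh (-(k * v) * τ + k * (x - x₀))) := by
    funext τ; ring_nf
  rw [hwave, deriv_const_add', deriv_const_mul_field', deriv_eval_tanh_affine]
  ring_nf

end TravelingWave

/-- With `k = (1/2)·√(11/19)`, `d = √(11/19)`, the function
`u(x,t) = b + (15/19)·d·(−9·tanh(k(x − bt − x₀)) + 11·tanh³(k(x − bt − x₀)))`
is a classical solution of the Kuramoto–Sivashinsky equation with `α = θ = 1`: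
`u_t + u·u_x + u_xx + u_xxxx = 0` everywhere. -/
theorem KS_exact_solution (b x₀ : ℝ)
    (k d : ℝ) (hk : k = (1 / 2) * Real.sqrt (11 / 19)) (hd : d = Real.sqrt (11 / 19))
    (u : ℝ → ℝ → ℝ)
    (hu : u = fun x t => b + (15 / 19) * d *
      (-9 * Real.tanh (k * (x - b * t - x₀)) + 11 * Real.tanh (k * (x - b * t - x₀)) ^ 3)) :
    ∀ x t : ℝ,
      deriv (fun τ => u x τ) t + u x t * deriv (fun ξ => u ξ t) x +
        iteratedDeriv 2 (fun ξ => u ξ t) x + iteratedDeriv 4 (fun ξ => u ξ t) x = 0 := by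
  have hd2 : d ^ 2 = 11 / 19 := by rw [hd, sq_sqrt (by norm_num)]
  have hkd : k = d / 2 := by rw [hk, hd]; ring
  have hu_profile :
      u = fun ξ τ => b + 15 / 19 * d * ksProfile.eval (tanh (k * (ξ - b * τ - x₀))) := by
    simp only [hu, ksProfile, eval_add, eval_mul, eval_neg, eval_ofNat, eval_pow, eval_X]
  intro x t
  subst hu_profile
  beta_reduce
  rw [deriv_tanh_wave_time, ← iteratedDeriv_one, iteratedDeriv_tanh_wave_space one_pos,
    iteratedDeriv_tanh_wave_space two_pos, iteratedDeriv_tanh_wave_space four_pos,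
    Function.iterate_one, hkd]
  set T := tanh (d / 2 * (x - b * t - x₀))
  linear_combination (15 / 38 * d ^ 3) * ksProfile_identity T
    + (15 / 304 * d ^ 3 * (tanhDerivative^[4] ksProfile).eval T) * hd2
end
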